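/- arXiv:1809.04628 — 2 statements merged into one kernel-verified Lean document; each statement's English description precedes it below -/
import Mathlib

section
/- Let p ≥ 3 be a prime. Then for every n ∈ ℕ₊, ν_p( D_p(n) − D_p(n−1) ) = 1. -/
open PowerSeries Finset

/-- The number of digits equal to `i` in the base-`p` representation of `n`. -/
def Np (p i n : ℕ) : ℕ := (Nat.digits p n).count i

/-- `Dcoef p r n` is the coefficient of `x^n` in `∏_{i=0}^∞ (1 - x^{p^i})^r`.
Since `p ≥ 2`, the factors with index `i > n` do not affect the coefficient of `x^n`,
so the product may be truncated at `i = n`. -/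
noncomputable def Dcoef (p r n : ℕ) : ℤ :=
  PowerSeries.coeff n (∏ i ∈ Finset.range (n + 1), (1 - PowerSeries.X ^ p ^ i) ^ r)

/-- `Dp p n = D_{p,p-1}(n)`. -/
noncomputable def Dp (p n : ℕ) : ℤ := Dcoef p (p - 1) n

/-- `Acoef m k n` is the coefficient of `x^n` in `∏_{i=0}^∞ (1 - x^{m^i})^{-k}`,
the number of `k`-colored `m`-ary partitions of `n`.  Here `(1 - X^{m^i})⁻¹` is
realized as `PowerSeries.invOfUnit (1 - X ^ m ^ i) 1`, and since `m ≥ 2` the factors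
with index `i > n` do not affect the coefficient of `x^n`. -/
noncomputable def Acoef (m k n : ℕ) : ℤ :=
  PowerSeries.coeff n
    (∏ i ∈ Finset.range (n + 1),
      (PowerSeries.invOfUnit (1 - PowerSeries.X ^ m ^ i) 1) ^ k)

/-!
Since `∏_{i ≤ N} (1 - X^{p^i})^{p-1} = (1 - X)^{p-1} · (∏_{i < N} (1 - X^{p^i})^{p-1})(X^p)` and
`(1 - X)^{p-1}` has degree `< p`, one gets `D_p(pq + e) = c_e D_p(q)` for every digit `e < p`,
where `c_e = (-1)^e C(p-1, e)`. The identity `(e+1) c_{e+1} = (e+1-p) c_e` shows `c_e ≡ 1 (mod p)`,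
hence `D_p(n) ≡ 1 (mod p)`. For odd `p`, `c_0 = c_{p-1} = 1`, so replacing `n` by `n / p` changes
neither `D_p(n)` nor `D_p(n-1)` when `p ∣ n`. If `p ∤ n`, the same identity gives
`(n mod p) (D_p(n) - D_p(n-1)) = -p D_p(n-1)`, whose right-hand side has valuation exactly one.
-/

namespace Polynomial

theorem coeff_one_sub_X_pow (R : Type*) [CommRing R] (r k : ℕ) :
    ((1 - X : R[X]) ^ r).coeff k = (-1) ^ k * r.choose k := by
  have hterm : ∀ m, (-X : R[X]) ^ m * 1 ^ (r - m) * (r.choose m : R[X]) =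
      C ((-1 : R) ^ m * r.choose m) * X ^ m := fun m => by
    rw [neg_pow, one_pow, mul_one, C_mul, C_pow, C_neg, C_1, ← C_eq_natCast]; ring
  simp only [sub_eq_neg_add, add_pow, finsetSum_coeff, hterm, coeff_C_mul_X_pow, sum_ite_eq,
    mem_range]
  split_ifs with hk
  · rfl
  · rw [Nat.choose_eq_zero_of_lt (by omega), Nat.cast_zero, mul_zero]

theorem coeff_mul_expand_of_natDegree_lt {R : Type*} [CommSemiring R] {p : ℕ} {f : R[X]}
    (hf : f.natDegree < p) (g : R[X]) (n : ℕ) :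
    (f * expand R p g).coeff n = f.coeff (n % p) * g.coeff (n / p) := by
  have hp : 0 < p := by omega
  rw [coeff_mul, Finset.sum_eq_single_of_mem (n % p, p * (n / p))
    (HasAntidiagonal.mem_antidiagonal.mpr (Nat.mod_add_div n p)), coeff_expand_mul' hp]
  rintro ⟨a, b⟩ hab hne
  rw [HasAntidiagonal.mem_antidiagonal] at hab
  rw [coeff_expand hp]
  split_ifs with hb
  · obtain ⟨c, rfl⟩ := hb
    rw [coeff_eq_zero_of_natDegree_lt, zero_mul]
    by_contra! ha
    have hmod : n % p = a := by rw [← hab, Nat.add_mul_mod_self_left, Nat.mod_eq_of_lt (by omega)]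
    have hdiv : n / p = c := by
      rw [← hab, Nat.add_mul_div_left _ _ hp, Nat.div_eq_of_lt (by omega), zero_add]
    exact hne (by rw [hmod, hdiv])
  · rw [mul_zero]

end Polynomial

open Polynomial

noncomputable def truncatedProd (p r N : ℕ) : ℤ[X] :=
  ∏ i ∈ range N, (1 - Polynomial.X ^ p ^ i : ℤ[X]) ^ r

theorem truncatedProd_succ (p r N : ℕ) :
    truncatedProd p r (N + 1) =
      (1 - Polynomial.X : ℤ[X]) ^ r * expand ℤ p (truncatedProd p r N) := by
  simp only [truncatedProd, prod_range_succ', map_prod, map_pow, map_sub, map_one,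
    Polynomial.expand_X, ← pow_mul, ← pow_succ', pow_zero, pow_one]
  exact mul_comm _ _

theorem coeff_truncatedProd_succ {p r N n : ℕ} (hn : n < p ^ N) :
    (truncatedProd p r (N + 1)).coeff n = (truncatedProd p r N).coeff n := by
  obtain ⟨g, hg⟩ : (Polynomial.X : ℤ[X]) ^ p ^ N ∣ (1 - Polynomial.X ^ p ^ N : ℤ[X]) ^ r - 1 := by
    have := sub_dvd_pow_sub_pow (1 - Polynomial.X ^ p ^ N : ℤ[X]) 1 r
    rwa [sub_sub_cancel_left, neg_dvd, one_pow] at this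
  rw [truncatedProd, prod_range_succ, ← truncatedProd, eq_add_of_sub_eq hg, mul_add, mul_one,
    coeff_add, mul_left_comm, Polynomial.coeff_X_pow_mul', if_neg (by omega), zero_add]

theorem coeff_truncatedProd_of_le {p r M N n : ℕ} (hp : 0 < p) (hn : n < p ^ M) (hMN : M ≤ N) :
    (truncatedProd p r N).coeff n = (truncatedProd p r M).coeff n := by
  induction N, hMN using Nat.le_induction with
  | base => rfl
  | succ N hMN ih =>
    rw [coeff_truncatedProd_succ (hn.trans_le (Nat.pow_le_pow_right hp hMN)), ih]

theorem Dcoef_eq_coeff_truncatedProd {p r n N : ℕ} (hp : 1 < p) (hn : n < p ^ N) :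
    Dcoef p r n = (truncatedProd p r N).coeff n := by
  have hn' : n < p ^ (n + 1) := (Nat.lt_pow_self hp).trans (Nat.pow_lt_pow_right hp n.lt_succ_self)
  have hDcoef : Dcoef p r n = (truncatedProd p r (n + 1)).coeff n := by
    rw [Dcoef, truncatedProd, ← Polynomial.coeff_coe, ← Polynomial.coeToPowerSeries.ringHom_apply,
      map_prod Polynomial.coeToPowerSeries.ringHom]
    simp [Polynomial.coeToPowerSeries.ringHom_apply]
  rw [hDcoef]
  rcases le_total N (n + 1) with h | h
  · exact coeff_truncatedProd_of_le (by omega) hn h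
  · exact (coeff_truncatedProd_of_le (by omega) hn' h).symm

/-- The coefficient of `X ^ d` in `(1 - X) ^ (p - 1)`; `Dp p n` is the product of
`digitFactor p d` over the base-`p` digits `d` of `n`. -/
def digitFactor (p d : ℕ) : ℤ := (-1) ^ d * (p - 1).choose d

theorem digitFactor_zero (p : ℕ) : digitFactor p 0 = 1 := by
  simp [digitFactor]

theorem digitFactor_pred_self {p : ℕ} (hp : Odd p) : digitFactor p (p - 1) = 1 := by
  obtain ⟨k, rfl⟩ := hp
  simp [digitFactor]

theorem succ_mul_digitFactor_succ {p d : ℕ} (hd : d < p) :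
    (d + 1 : ℤ) * digitFactor p (d + 1) = (d + 1 - p) * digitFactor p d := by
  have h := Nat.choose_succ_right_eq (p - 1) d
  zify [show d ≤ p - 1 by omega, show 1 ≤ p by omega] at h
  simp only [digitFactor, pow_succ]
  linear_combination -(-1 : ℤ) ^ d * h

theorem digitFactor_cast_zmod {p d : ℕ} (hp : p.Prime) (hd : d < p) :
    (digitFactor p d : ZMod p) = 1 := by
  have := Fact.mk hp
  induction d with
  | zero => simp [digitFactor_zero]
  | succ d ih =>
    have hcast := congrArg (Int.cast : ℤ → ZMod p) (succ_mul_digitFactor_succ (by omega : d < p))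
    push_cast [ih (by omega), ZMod.natCast_self, sub_zero, mul_one] at hcast
    have hunit : ((d + 1 : ℕ) : ZMod p) ≠ 0 := by
      rw [Ne, ZMod.natCast_eq_zero_iff]
      exact Nat.not_dvd_of_pos_of_lt d.succ_pos hd
    push_cast at hunit
    exact mul_left_cancel₀ hunit (hcast.trans (mul_one _).symm)

theorem Dp_zero (p : ℕ) : Dp p 0 = 1 := by
  simp [Dp, Dcoef]

theorem Dp_eq_digitFactor_mul {p : ℕ} (hp : 1 < p) (n : ℕ) :
    Dp p n = digitFactor p (n % p) * Dp p (n / p) := by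
  have hdeg : ((1 - Polynomial.X : ℤ[X]) ^ (p - 1)).natDegree < p := by
    have : ((1 - Polynomial.X : ℤ[X]) ^ (p - 1)).natDegree ≤ p - 1 := by compute_degree
    omega
  rw [Dp, Dcoef_eq_coeff_truncatedProd hp (n.lt_succ_self.trans (Nat.lt_pow_self hp)),
    truncatedProd_succ, coeff_mul_expand_of_natDegree_lt hdeg, coeff_one_sub_X_pow, Dp,
    Dcoef_eq_coeff_truncatedProd hp ((Nat.div_le_self n p).trans_lt (Nat.lt_pow_self hp))]
  simp [digitFactor]

theorem Dp_base_mul_add {p q e : ℕ} (hp : 1 < p) (he : e < p) :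
    Dp p (p * q + e) = digitFactor p e * Dp p q := by
  rw [Dp_eq_digitFactor_mul hp]
  simp [Nat.mul_add_div (by omega : 0 < p), Nat.mod_eq_of_lt he, Nat.div_eq_of_lt he]

theorem Dp_base_mul {p : ℕ} (hp : 1 < p) (n : ℕ) : Dp p (p * n) = Dp p n := by
  simpa [digitFactor_zero] using Dp_base_mul_add (q := n) hp (by omega : 0 < p)

theorem Dp_base_mul_sub_one {p n : ℕ} (hp : 1 < p) (hodd : Odd p) (hn : 1 ≤ n) :
    Dp p (p * n - 1) = Dp p (n - 1) := by
  have hsplit : p * n - 1 = p * (n - 1) + (p - 1) := by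
    rw [Nat.mul_sub, mul_one]
    have := Nat.le_mul_of_pos_right p hn
    omega
  rw [hsplit, Dp_base_mul_add hp (by omega), digitFactor_pred_self hodd, one_mul]

theorem Dp_cast_zmod {p : ℕ} (hp : p.Prime) (n : ℕ) : (Dp p n : ZMod p) = 1 := by
  induction n using Nat.strong_induction_on with
  | _ n ih =>
    rcases n.eq_zero_or_pos with rfl | hn
    · simp [Dp_zero]
    · rw [Dp_eq_digitFactor_mul hp.one_lt, Int.cast_mul,
        digitFactor_cast_zmod hp (n.mod_lt hp.pos), ih _ (Nat.div_lt_self hn hp.one_lt), one_mul]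

theorem not_dvd_Dp {p : ℕ} (hp : p.Prime) (n : ℕ) : ¬ (p : ℤ) ∣ Dp p n := by
  have : Fact (1 < p) := ⟨hp.one_lt⟩
  rw [← ZMod.intCast_zmod_eq_zero_iff_dvd, Dp_cast_zmod hp]
  exact one_ne_zero

theorem mod_mul_Dp_sub_Dp_pred {p n : ℕ} (hp : 1 < p) (hn : ¬ p ∣ n) :
    ((n % p : ℕ) : ℤ) * (Dp p n - Dp p (n - 1)) = -p * Dp p (n - 1) := by
  obtain ⟨e, he⟩ : ∃ e, n % p = e + 1 := Nat.exists_eq_succ_of_ne_zero (by omega)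
  have he_lt : e + 1 < p := he ▸ Nat.mod_lt n (by omega)
  have hn_eq : n = p * (n / p) + (e + 1) := by rw [← he, Nat.div_add_mod]
  generalize n / p = q at hn_eq
  subst hn_eq
  rw [he, show p * q + (e + 1) - 1 = p * q + e by omega, Dp_base_mul_add hp he_lt,
    Dp_base_mul_add hp (by omega)]
  push_cast
  linear_combination Dp p q * succ_mul_digitFactor_succ (p := p) (by omega : e < p)

theorem emultiplicity_Dp_sub_Dp_pred {p n : ℕ} (hp : p.Prime) (hn : ¬ p ∣ n) :
    emultiplicity (p : ℤ) (Dp p n - Dp p (n - 1)) = 1 := by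
  have hprime : Prime (p : ℤ) := Nat.prime_iff_prime_int.mp hp
  have hmod : ¬ (p : ℤ) ∣ ((n % p : ℕ) : ℤ) := by
    rwa [Int.natCast_dvd_natCast, Nat.dvd_mod_iff dvd_rfl]
  have hself : emultiplicity (p : ℤ) p = 1 :=
    (FiniteMultiplicity.of_prime_left hprime hprime.ne_zero).emultiplicity_self
  have h := congrArg (emultiplicity (p : ℤ)) (mod_mul_Dp_sub_Dp_pred hp.one_lt hn)
  rwa [emultiplicity_mul hprime, emultiplicity_mul hprime, emultiplicity_neg, hself,
    emultiplicity_eq_zero.mpr hmod, emultiplicity_eq_zero.mpr (not_dvd_Dp hp _), zero_add,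
    add_zero] at h

theorem stmt4 (p : ℕ) (hp : p.Prime) (hp3 : 3 ≤ p) (n : ℕ) (hn : 1 ≤ n) :
    emultiplicity (p : ℤ) (Dp p n - Dp p (n - 1)) = 1 := by
  have hodd : Odd p := hp.odd_of_ne_two (by omega)
  induction n using Nat.strong_induction_on with
  | _ n ih =>
    by_cases hpn : p ∣ n
    · obtain ⟨m, rfl⟩ := hpn
      have hm : 1 ≤ m := Nat.pos_of_mul_pos_left hn
      rw [Dp_base_mul hp.one_lt, Dp_base_mul_sub_one hp.one_lt hodd hm]
      exact ih m (lt_mul_left hm hp.one_lt) hm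
    · exact emultiplicity_Dp_sub_Dp_pred hp hpn
end

section
/- Let p ≥ 3 be a prime, u ∈ {2,…,p−1}. Then at least one of the two congruences C(p+u−1, 0) − C(p+u−1, p) ≡ 0 (mod p²) and C(p+u−1, 1) − C(p+u−1, p+1) ≡ 0 (mod p²) fails; i.e., there exists j ∈ {0,1} with p² ∤ ( C(p+u−1, j) − C(p+u−1, p+j) ). -/
open PowerSeries Finset

/-!
Write `n = p + u - 1 = p + m`. Pascal's relation `C(n, p+1) (p+1) = C(n, p) m` eliminates
both binomials of order `≥ p`: `(n - C(n, p+1)) (p+1) - (1 - C(n, p)) m = p (n + 1)`. So if both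
differences were divisible by `p²`, then `p ∣ n + 1 = p + u`, i.e. `p ∣ u`, impossible for
`0 < u < p`.
-/

lemma Nat.choose_add_succ_mul (p m : ℕ) :
    (p + m).choose (p + 1) * (p + 1) = (p + m).choose p * m := by
  simpa using Nat.choose_succ_right_eq (p + m) p

lemma dvd_succ_of_sq_dvd_one_sub_choose_of_sq_dvd_sub_choose {p m : ℕ} (hp : 0 < p)
    (h₀ : (p : ℤ) ^ 2 ∣ 1 - (p + m).choose p)
    (h₁ : (p : ℤ) ^ 2 ∣ ((p + m : ℕ) : ℤ) - (p + m).choose (p + 1)) :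
    p ∣ m + 1 := by
  have pascal : ((p + m).choose (p + 1) : ℤ) * (p + 1) = (p + m).choose p * m := by
    exact_mod_cast Nat.choose_add_succ_mul p m
  have elim : (((p + m : ℕ) : ℤ) - (p + m).choose (p + 1)) * (p + 1)
      - (1 - ((p + m).choose p : ℤ)) * m = p * ((p + (m + 1) : ℕ) : ℤ) := by
    push_cast
    linear_combination -pascal
  have hsq : (p : ℤ) * p ∣ p * ((p + (m + 1) : ℕ) : ℤ) := by
    rw [← elim, ← sq]
    exact dvd_sub (h₁.mul_right _) (h₀.mul_right _)
  have : p ∣ p + (m + 1) := by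
    exact_mod_cast (mul_dvd_mul_iff_left (by positivity : (p : ℤ) ≠ 0)).mp hsq
  exact (Nat.dvd_add_right (dvd_refl p)).mp this

theorem stmt7_general (p u : ℕ) (hu1 : 2 ≤ u) (hu2 : u ≤ p - 1) :
    ∃ j : ℕ, j ≤ 1 ∧
      ¬ ((p : ℤ) ^ 2 ∣ ((p + u - 1).choose j : ℤ) - ((p + u - 1).choose (p + j) : ℤ)) := by
  by_contra! h
  obtain ⟨m, rfl⟩ : ∃ m, u = m + 1 := ⟨u - 1, by omega⟩
  have hn : p + (m + 1) - 1 = p + m := by omega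
  have h₀ := h 0 zero_le_one
  have h₁ := h 1 le_rfl
  rw [hn, Nat.choose_zero_right, Nat.cast_one] at h₀
  rw [hn, Nat.choose_one_right] at h₁
  have hdvd : p ∣ m + 1 :=
    dvd_succ_of_sq_dvd_one_sub_choose_of_sq_dvd_sub_choose (by omega) h₀ h₁
  have hle : p ≤ m + 1 := Nat.le_of_dvd (Nat.succ_pos m) hdvd
  omega

theorem stmt7 (p u : ℕ) (hp : p.Prime) (hp3 : 3 ≤ p) (hu1 : 2 ≤ u) (hu2 : u ≤ p - 1) :
    ∃ j : ℕ, j ≤ 1 ∧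
      ¬ ((p : ℤ) ^ 2 ∣ ((p + u - 1).choose j : ℤ) - ((p + u - 1).choose (p + j) : ℤ)) :=
  stmt7_general p u hu1 hu2
end
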